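/- The ⊑ (sub-term-set) relation is a forward simulation: for extended applicative terms u, v over a grammar G', if u ⊑ v and u → u' (one-step reduction in G'), then there exists v' with v →* v' and u' ⊑ v'. Here u ⊑ v is defined inductively: heads (variables, non-terminals, terminals) relate to themselves; u U ⊑ u' U' if u ⊑ u' and U ⊑ U'; and for term sets, U ⊑ U' if every member of U is ⊑ some member of U'. Moreover, if π is a tree with π ⊑ v, then v →* π. -/

import Mathlib

/-- Extended terms u ::= x | A | a | u U | λx.u, where an argument
    U = {u₁,…,u_k} (k ≥ 1) is a non-empty set of terms representing
    non-deterministic choice (represented as a list). -/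
inductive ETm (V N T : Type) where
  | var : V → ETm V N T
  | nt : N → ETm V N T
  | tm : T → ETm V N T
  | app : ETm V N T → List (ETm V N T) → ETm V N T
  | lam : V → ETm V N T → ETm V N T

/-- Iterated application of a head to a list of argument sets. -/
def appLE {V N T : Type} : ETm V N T → List (List (ETm V N T)) → ETm V N T
  | u, [] => u
  | u, U :: Us => appLE (.app u U) Us

/-- The set-valued substitution [σ]u of term-sets for variables in an
    extended term. -/
def dsub {V N T : Type} [DecidableEq V]
    (σ : V → Option (List (ETm V N T))) : ETm V N T → List (ETm V N T)
  | .var x => (σ x).getD [.var x]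
  | .nt A => [.nt A]
  | .tm a => [.tm a]
  | .app u U =>
      (dsub σ u).map (fun v => .app v (U.attach.flatMap (fun w => dsub σ w.1)))
  | .lam x u =>
      (dsub (fun y => if y = x then none else σ y) u).map (.lam x)
termination_by u => sizeOf u
decreasing_by
  all_goals simp_wf
  all_goals first
    | omega
    | (have := List.sizeOf_lt_of_mem w.2; omega)

/-- v ∈ [σ]u : v is one of the results of the set-valued substitution. -/
def DSub {V N T : Type} [DecidableEq V]
    (σ : V → Option (List (ETm V N T))) (u v : ETm V N T) : Prop :=
  v ∈ dsub σ u

/-- An extended higher-order grammar: rules A x₁ ⋯ x_k → u. -/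
structure EGrammar (V N T : Type) (ar : T → Nat) where
  start : N
  rules : N → List V → ETm V N T → Prop

/-- The substitution sending the parameters xs to the argument sets Us. -/
def sigmaOf {V N T : Type} [DecidableEq V] (xs : List V)
    (Us : List (List (ETm V N T))) : V → Option (List (ETm V N T)) :=
  fun x => ((xs.zip Us).find? (fun p => p.1 = x)).map Prod.snd

/-- One-step reduction of extended terms: a fully applied non-terminal is
    rewritten (lazily, via the set-valued substitution); under a terminal,
    either a singleton argument is reduced, or a non-singleton argument set is
    collapsed to one of its members. -/
inductive ERed {V N T : Type} [DecidableEq V] {ar : T → Nat}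
    (G : EGrammar V N T ar) : ETm V N T → ETm V N T → Prop where
  | step {A xs body Us u'} : G.rules A xs body → Us.length = xs.length →
      DSub (sigmaOf xs Us) body u' →
      ERed G (appLE (.nt A) Us) u'
  | ctx {a u u' Us₁ Us₂} : ERed G u u' →
      Us₁.length + 1 + Us₂.length = ar a →
      ERed G (appLE (.tm a) (Us₁ ++ [u] :: Us₂))
             (appLE (.tm a) (Us₁ ++ [u'] :: Us₂))
  | collapse {a u U Us₁ Us₂} : u ∈ U → U.length ≠ 1 →
      Us₁.length + 1 + Us₂.length = ar a →
      ERed G (appLE (.tm a) (Us₁ ++ U :: Us₂))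
             (appLE (.tm a) (Us₁ ++ [u] :: Us₂))

/-- Many-step reduction of extended terms. -/
def ERedStar {V N T : Type} [DecidableEq V] {ar : T → Nat}
    (G : EGrammar V N T ar) : ETm V N T → ETm V N T → Prop :=
  Relation.ReflTransGen (ERed G)

/-- Trees over a ranked alphabet (T, ar). -/
inductive GTr (T : Type) (ar : T → Nat) where
  | mk (a : T) (f : Fin (ar a) → GTr T ar)

/-- A tree as an extended term (all argument sets singletons). -/
def GTr.toETm {V N T : Type} {ar : T → Nat} : GTr T ar → ETm V N T
  | .mk a f => appLE (.tm a) (List.ofFn (fun i => [(f i).toETm]))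

mutual
  /-- The sub-term-set relation u ⊑ v on extended terms. -/
  inductive ESub {V N T : Type} : ETm V N T → ETm V N T → Prop where
    | var {x} : ESub (.var x) (.var x)
    | nt {A} : ESub (.nt A) (.nt A)
    | tm {a} : ESub (.tm a) (.tm a)
    | app {u u' U U'} : ESub u u' → ESubL U U' → ESub (.app u U) (.app u' U')
    | lam {x u u'} : ESub u u' → ESub (.lam x u) (.lam x u')

  /-- U ⊑ U' for term sets: every member of U is ⊑ some member of U'. -/
  inductive ESubL {V N T : Type} : List (ETm V N T) → List (ETm V N T) → Prop where
    | nil {U'} : ESubL [] U'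
    | cons {v U U'} : ESubMem v U' → ESubL U U' → ESubL (v :: U) U'

  /-- v is ⊑ some member of the term set U'. -/
  inductive ESubMem {V N T : Type} : ETm V N T → List (ETm V N T) → Prop where
    | hd {v v' U'} : ESub v v' → ESubMem v (v' :: U')
    | tl {v v' U'} : ESubMem v U' → ESubMem v (v' :: U')
end

/-! Let `u ⊑ v`. A rewrite step `A Us → u'` is matched by the same rule
applied to the argument sets of `v`, which lie above `Us`, because set-valued substitution is
monotone for `⊑`. A step inside a singleton argument `[u₀]` of a terminal is matched by collapsing
the corresponding argument set of `v` to a member above `u₀` and simulating the step there. A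
collapse needs no step at all: the chosen member is still below the argument set of `v`. For a
tree `π ⊑ v`, collapse each argument set of `v` to a member above the corresponding subtree and
recurse. -/

section Subterm

variable {V N T : Type}

theorem eSubMem_iff {u : ETm V N T} {W : List (ETm V N T)} :
    ESubMem u W ↔ ∃ w ∈ W, ESub u w := by
  induction W with
  | nil =>
    simp only [List.not_mem_nil, false_and, exists_false, iff_false]
    rintro ⟨⟩
  | cons w W ih =>
    constructor
    · rintro (hu | hu)
      · exact ⟨w, List.mem_cons_self, hu⟩
      · obtain ⟨w', hw', hu⟩ := ih.1 hu
        exact ⟨w', List.mem_cons_of_mem _ hw', hu⟩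
    · rintro ⟨w', hw', hu⟩
      rcases List.mem_cons.1 hw' with rfl | hw'
      · exact .hd hu
      · exact .tl (ih.2 ⟨w', hw', hu⟩)

theorem eSubL_iff {U W : List (ETm V N T)} :
    ESubL U W ↔ ∀ u ∈ U, ∃ w ∈ W, ESub u w := by
  induction U with
  | nil => simpa using ESubL.nil
  | cons u U ih =>
    constructor
    · rintro (_ | ⟨hu, hU⟩)
      simpa [eSubMem_iff.1 hu] using ih.1 hU
    · intro h
      exact .cons (eSubMem_iff.2 (h u List.mem_cons_self))
        (ih.2 fun u' hu' => h u' (List.mem_cons_of_mem _ hu'))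

theorem eSubL_singleton_iff {u : ETm V N T} {W : List (ETm V N T)} :
    ESubL [u] W ↔ ∃ w ∈ W, ESub u w := by
  simp [eSubL_iff]

theorem ESubL.map {U W : List (ETm V N T)} {f g : ETm V N T → ETm V N T} (hUW : ESubL U W)
    (hfg : ∀ {u w}, ESub u w → ESub (f u) (g w)) : ESubL (U.map f) (W.map g) := by
  rw [eSubL_iff] at hUW ⊢
  intro _ hfu
  obtain ⟨u, hu, rfl⟩ := List.mem_map.1 hfu
  obtain ⟨w, hw, huw⟩ := hUW u hu
  exact ⟨g w, List.mem_map_of_mem hw, hfg huw⟩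

theorem appLE_append (u : ETm V N T) (Us Vs : List (List (ETm V N T))) :
    appLE u (Us ++ Vs) = appLE (appLE u Us) Vs := by
  induction Us generalizing u with
  | nil => rfl
  | cons U Us ih => exact ih _

theorem appLE_append_singleton (u : ETm V N T) (Us : List (List (ETm V N T)))
    (U : List (ETm V N T)) : appLE u (Us ++ [U]) = .app (appLE u Us) U := by
  rw [appLE_append]
  rfl

theorem ESub.appLE {h h' : ETm V N T} {Us Vs : List (List (ETm V N T))} (hh : ESub h h')
    (hUs : List.Forall₂ ESubL Us Vs) : ESub (_root_.appLE h Us) (_root_.appLE h' Vs) := by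
  induction hUs generalizing h h' with
  | nil => exact hh
  | cons hU _ ih => exact ih (.app hh hU)

theorem ESub.appLE_inv {h w : ETm V N T} {Us : List (List (ETm V N T))}
    (hh : ∀ w, ESub h w → w = h) (hw : ESub (_root_.appLE h Us) w) :
    ∃ Vs, w = _root_.appLE h Vs ∧ List.Forall₂ ESubL Us Vs := by
  induction Us using List.reverseRecOn generalizing w with
  | nil => exact ⟨[], hh w hw, .nil⟩
  | append_singleton Us U ih =>
    rw [appLE_append_singleton] at hw
    obtain _ | _ | _ | ⟨hhead, hU⟩ := hw
    obtain ⟨Vs, rfl, hUs⟩ := ih hhead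
    exact ⟨Vs ++ [_], (appLE_append_singleton ..).symm, List.rel_append hUs (.cons hU .nil)⟩

theorem eSub_nt_inv {A : N} {w : ETm V N T} (hw : ESub (.nt A) w) : w = .nt A := by
  cases hw; rfl

theorem eSub_tm_inv {a : T} {w : ETm V N T} (hw : ESub (.tm a) w) : w = .tm a := by
  cases hw; rfl

end Subterm

theorem List.Forall₂.exists_eq_append_cons {α β : Type*} {R : α → β → Prop} {l₁ l₂ : List α}
    {a : α} {l : List β} (h : List.Forall₂ R (l₁ ++ a :: l₂) l) :
    ∃ m₁ b m₂, l = m₁ ++ b :: m₂ ∧ List.Forall₂ R l₁ m₁ ∧ R a b ∧ List.Forall₂ R l₂ m₂ := by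
  induction l₁ generalizing l with
  | nil =>
    obtain _ | ⟨hab, h₂⟩ := h
    exact ⟨[], _, _, rfl, .nil, hab, h₂⟩
  | cons x l₁ ih =>
    obtain _ | ⟨hx, h⟩ := h
    obtain ⟨m₁, b, m₂, rfl, h₁, hab, h₂⟩ := ih h
    exact ⟨_ :: m₁, b, m₂, rfl, .cons hx h₁, hab, h₂⟩

section Substitution

variable {V N T : Type} [DecidableEq V]

theorem sigmaOf_rel (xs : List V) {Us Vs : List (List (ETm V N T))}
    (hUs : List.Forall₂ ESubL Us Vs) (x : V) :
    Option.Rel ESubL (sigmaOf xs Us x) (sigmaOf xs Vs x) := by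
  induction xs generalizing Us Vs with
  | nil => exact .none
  | cons y xs ih =>
    cases hUs with
    | nil => exact .none
    | cons hU hUs =>
      by_cases hxy : y = x
      · simpa [sigmaOf, hxy] using Option.Rel.some hU
      · simpa [sigmaOf, hxy] using ih hUs

theorem eSubL_dsub {σ τ : V → Option (List (ETm V N T))}
    (hστ : ∀ x, Option.Rel ESubL (σ x) (τ x)) (u : ETm V N T) :
    ESubL (dsub σ u) (dsub τ u) := by
  match u with
  | .var x =>
    have hx := hστ x
    rw [dsub, dsub]
    generalize σ x = s at hx ⊢
    generalize τ x = t at hx ⊢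
    cases hx with
    | some hU => exact hU
    | none => exact .cons (.hd .var) .nil
  | .nt A => rw [dsub, dsub]; exact .cons (.hd .nt) .nil
  | .tm a => rw [dsub, dsub]; exact .cons (.hd .tm) .nil
  | .lam x u =>
    have hu := eSubL_dsub (σ := fun y => if y = x then none else σ y)
      (τ := fun y => if y = x then none else τ y)
      (fun y => by split_ifs; exacts [.none, hστ y]) u
    rw [dsub, dsub]
    exact hu.map .lam
  | .app u U =>
    have hU : ESubL (U.attach.flatMap fun w => dsub σ w.1)
        (U.attach.flatMap fun w => dsub τ w.1) := by
      rw [eSubL_iff]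
      simp only [List.mem_flatMap]
      rintro w ⟨⟨w₀, hw₀⟩, hmem, hw⟩
      obtain ⟨w', hw', hww'⟩ := eSubL_iff.1 (eSubL_dsub hστ w₀) w hw
      exact ⟨w', ⟨⟨w₀, hw₀⟩, hmem, hw'⟩, hww'⟩
    rw [dsub, dsub]
    exact (eSubL_dsub hστ u).map (.app · hU)
termination_by sizeOf u
decreasing_by
  all_goals simp_wf
  all_goals first
    | omega
    | (have := List.sizeOf_lt_of_mem hw₀; omega)

end Substitution

section Reduction

variable {V N T : Type} [DecidableEq V] {ar : T → Nat} {G : EGrammar V N T ar} {a : T}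

theorem eRedStar_ctx {u u' : ETm V N T} {P S : List (List (ETm V N T))}
    (h : ERedStar G u u') (hlen : P.length + 1 + S.length = ar a) :
    ERedStar G (appLE (.tm a) (P ++ [u] :: S)) (appLE (.tm a) (P ++ [u'] :: S)) := by
  induction h with
  | refl => exact .refl
  | tail _ hstep ih => exact ih.tail (.ctx hstep hlen)

theorem eRedStar_select {u : ETm V N T} {U : List (ETm V N T)} {P S : List (List (ETm V N T))}
    (hu : u ∈ U) (hlen : P.length + 1 + S.length = ar a) :
    ERedStar G (appLE (.tm a) (P ++ U :: S)) (appLE (.tm a) (P ++ [u] :: S)) := by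
  by_cases hU : U.length = 1
  · obtain ⟨w, rfl⟩ := List.length_eq_one_iff.1 hU
    rw [List.mem_singleton.1 hu]
    exact .refl
  · exact .single (.collapse hu hU hlen)

theorem eRedStar_args {Ts : List (ETm V N T)} {Vs P : List (List (ETm V N T))}
    (hVs : List.Forall₂ (fun t U => ∃ u ∈ U, ERedStar G u t) Ts Vs)
    (hlen : P.length + Vs.length = ar a) :
    ERedStar G (appLE (.tm a) (P ++ Vs)) (appLE (.tm a) (P ++ Ts.map fun t => [t])) := by
  induction hVs generalizing P with
  | nil => exact .refl
  | @cons t U Ts Vs htU _ ih =>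
    obtain ⟨u, hu, hut⟩ := htU
    have hlen₁ : P.length + 1 + Vs.length = ar a := by simp at hlen; omega
    have hrest := ih (P := P ++ [[t]]) (by simp at hlen ⊢; omega)
    simp only [List.append_assoc, List.singleton_append] at hrest
    exact ((eRedStar_select hu hlen₁).trans (eRedStar_ctx hut hlen₁)).trans hrest

theorem ESub.exists_eRedStar_of_eRed {u v u' : ETm V N T} (huv : ESub u v) (hu : ERed G u u') :
    ∃ v', ERedStar G v v' ∧ ESub u' v' := by
  induction hu generalizing v with
  | @step A xs body Us w hrule hlen hw =>
    obtain ⟨Vs, rfl, hUs⟩ := ESub.appLE_inv (fun _ => eSub_nt_inv) huv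
    obtain ⟨v', hv', hwv'⟩ :=
      eSubL_iff.1 (eSubL_dsub (sigmaOf_rel xs hUs) body) w hw
    exact ⟨v', .single (.step hrule (hUs.length_eq ▸ hlen) hv'), hwv'⟩
  | @ctx a _ _ _ _ _ hlen ih =>
    obtain ⟨Vs, rfl, hUs⟩ := ESub.appLE_inv (fun _ => eSub_tm_inv) huv
    obtain ⟨Vs₁, U, Vs₂, rfl, hUs₁, hU, hUs₂⟩ := hUs.exists_eq_append_cons
    obtain ⟨v₀, hv₀, huv₀⟩ := eSubL_singleton_iff.1 hU
    obtain ⟨v₀', hv₀', huv₀'⟩ := ih huv₀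
    have hlen' : Vs₁.length + 1 + Vs₂.length = ar a := by
      rw [← hUs₁.length_eq, ← hUs₂.length_eq]; exact hlen
    have hU' : ESubL [_] [v₀'] := eSubL_singleton_iff.2 ⟨_, List.mem_singleton_self _, huv₀'⟩
    exact ⟨_, (eRedStar_select hv₀ hlen').trans (eRedStar_ctx hv₀' hlen'),
      ESub.tm.appLE (List.rel_append hUs₁ (.cons hU' hUs₂))⟩
  | collapse hu _ _ =>
    obtain ⟨Vs, rfl, hUs⟩ := ESub.appLE_inv (fun _ => eSub_tm_inv) huv
    obtain ⟨Vs₁, U, Vs₂, rfl, hUs₁, hU, hUs₂⟩ := hUs.exists_eq_append_cons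
    have hU' : ESubL [_] U := eSubL_singleton_iff.2 (eSubL_iff.1 hU _ hu)
    exact ⟨_, .refl, ESub.tm.appLE (List.rel_append hUs₁ (.cons hU' hUs₂))⟩

theorem ESub.eRedStar_toETm (π : GTr T ar) {v : ETm V N T} (hπv : ESub π.toETm v) :
    ERedStar G v π.toETm := by
  induction π generalizing v with
  | mk a f ih =>
    rw [GTr.toETm] at hπv ⊢
    obtain ⟨Vs, rfl, hUs⟩ := ESub.appLE_inv (fun _ => eSub_tm_inv) hπv
    have hargs : List.ofFn (fun i => [((f i).toETm : ETm V N T)]) =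
        (List.ofFn fun i => (f i).toETm).map fun t => [t] := by
      simp [List.map_ofFn, Function.comp_def]
    rw [hargs, List.forall₂_map_left_iff] at hUs
    have hsub : ∀ t ∈ List.ofFn fun i => ((f i).toETm : ETm V N T),
        ∀ u, ESub t u → ERedStar G u t := by
      intro t ht
      obtain ⟨i, rfl⟩ := List.mem_ofFn.1 ht
      exact fun u => ih i
    have hVs : List.Forall₂ (fun t U => ∃ u ∈ U, ERedStar G u t) _ Vs :=
      ((List.forall₂_and_left _ _).2 ⟨hsub, hUs⟩).imp fun t U ⟨ht, htU⟩ => by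
        obtain ⟨u, hu, htu⟩ := eSubL_singleton_iff.1 htU
        exact ⟨u, hu, ht u htu⟩
    rw [hargs]
    simpa using eRedStar_args (P := []) hVs (by simpa using hUs.length_eq.symm)

end Reduction

/-- The relation ⊑ is a forward simulation for reduction of extended terms,
    and a tree below a term is reachable from it. -/
theorem stmt15 {V N T : Type} [DecidableEq V] {ar : T → Nat}
    (G : EGrammar V N T ar) :
    (∀ u v u' : ETm V N T, ESub u v → ERed G u u' →
        ∃ v', ERedStar G v v' ∧ ESub u' v') ∧
    (∀ (π : GTr T ar) (v : ETm V N T), ESub π.toETm v →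
        ERedStar G v π.toETm) :=
  ⟨fun _ _ _ huv hu => huv.exists_eRedStar_of_eRed hu, fun π _ hπv => ESub.eRedStar_toETm π hπv⟩
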